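/- With Γ₁ as above, for all 1 ≤ i, j ≤ n and multi-indices k, the intertwining identity X_{−δ_j}(Γ₁(x^k ⊗ v_{n+i})) = Γ₁((1/√2) k_j x^{k−δ_j} ⊗ v_{n+i} − √2 k_i x^{k−δ_i} ⊗ v_{n+j}) holds. -/

import Mathlib

/-!
Only `T_i` moves `v_{n+i}`, so `Γ₁ (x^k ⊗ v_{n+i}) = x^k ⊗ v_{n+i} - √2 (-1)^{|k|} k_i x^{k-δ_i} ⊗ v_0`.
Expanding both sides in the monomial basis, the `v_{n+i}` and `v_{n+j}` components agree at once
(removing a variable flips the parity sign), and the `v_0` components agree because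
`k_i (k - δ_i)_j = k_j (k - δ_j)_i` and `√2 · √2 = 2`.
-/

open Finsupp

noncomputable section

abbrev V (n : ℕ) : Type := ((Fin n →₀ ℕ) × Fin (2*n+1)) →₀ ℂ

def b {n : ℕ} (k : Fin n →₀ ℕ) (j : Fin (2*n+1)) : V n := Finsupp.single (k, j) 1

def mkOp {n : ℕ} (g : (Fin n →₀ ℕ) × Fin (2*n+1) → V n) : V n →ₗ[ℂ] V n :=
  Finsupp.lsum ℂ fun a => LinearMap.toSpanSingleton ℂ (V n) (g a)

def deg {n : ℕ} (k : Fin n →₀ ℕ) : ℕ := k.sum fun _ v => v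

def sgn {n : ℕ} (k : Fin n →₀ ℕ) : ℂ := (-1) ^ deg k

def rt2 : ℂ := Real.sqrt 2

def idx0 {n : ℕ} : Fin (2*n+1) := ⟨0, by omega⟩

def idxLo {n : ℕ} (i : Fin n) : Fin (2*n+1) := ⟨i.1+1, by have := i.isLt; omega⟩

def idxHi {n : ℕ} (i : Fin n) : Fin (2*n+1) := ⟨n+i.1+1, by have := i.isLt; omega⟩

/-- `T_i` applied to `x^k ⊗ v_j` (without the parity sign). -/
def TpApp {n : ℕ} (i : Fin n) (k : Fin n →₀ ℕ) (j : Fin (2*n+1)) : V n :=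
  if j = idx0 then b k (idxLo i) else if j = idxHi i then b k idx0 else 0

/-- `T_{-i}` applied to `x^k ⊗ v_j` (without the parity sign). -/
def TmApp {n : ℕ} (i : Fin n) (k : Fin n →₀ ℕ) (j : Fin (2*n+1)) : V n :=
  if j = idx0 then -(b k (idxHi i)) else if j = idxLo i then b k idx0 else 0

/-- The action of the odd root vector `X_{δ_j}` on `ℂ[x] ⊗ ℂ^{1|2n}`. -/
def Xplus {n : ℕ} (jj : Fin n) : V n →ₗ[ℂ] V n :=
  mkOp fun p => rt2⁻¹ • b (p.1 + Finsupp.single jj 1) p.2 + sgn p.1 • TpApp jj p.1 p.2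

/-- The action of the odd root vector `X_{-δ_i}` on `ℂ[x] ⊗ ℂ^{1|2n}`. -/
def Xminus {n : ℕ} (i : Fin n) : V n →ₗ[ℂ] V n :=
  mkOp fun p => (rt2⁻¹ * (p.1 i : ℂ)) • b (p.1 - Finsupp.single i 1) p.2
    + sgn p.1 • TmApp i p.1 p.2

/-- `Γ_{w₂} = 1⊗1 + √2 ∑ ∂_i ⊗ T_i - √2 ∑ x_i ⊗ T_{-i}`. -/
def Gamma2 {n : ℕ} : V n →ₗ[ℂ] V n :=
  mkOp fun p => b p.1 p.2
    + rt2 • ∑ i : Fin n, (sgn p.1 * (p.1 i : ℂ)) • TpApp i (p.1 - Finsupp.single i 1) p.2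
    - rt2 • ∑ i : Fin n, sgn p.1 • TmApp i (p.1 + Finsupp.single i 1) p.2

/-- `Γ_{w₁} = 1⊗1 - √2 ∑ ∂_i ⊗ T_i + √2 ∑ x_i ⊗ T_{-i}`. -/
def Gamma1 {n : ℕ} : V n →ₗ[ℂ] V n :=
  mkOp fun p => b p.1 p.2
    - rt2 • ∑ i : Fin n, (sgn p.1 * (p.1 i : ℂ)) • TpApp i (p.1 - Finsupp.single i 1) p.2
    + rt2 • ∑ i : Fin n, sgn p.1 • TmApp i (p.1 + Finsupp.single i 1) p.2

section Intertwining

variable {n : ℕ}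

lemma mkOp_b (g : (Fin n →₀ ℕ) × Fin (2*n+1) → V n) (k : Fin n →₀ ℕ) (j : Fin (2*n+1)) :
    mkOp g (b k j) = g (k, j) := by
  simp [mkOp, b]

lemma idxHi_ne_idx0 (i : Fin n) : (idxHi i : Fin (2*n+1)) ≠ idx0 := by
  simp only [idxHi, idx0, ne_eq, Fin.mk.injEq]; omega

lemma idxHi_ne_idxLo (i i' : Fin n) : (idxHi i : Fin (2*n+1)) ≠ idxLo i' := by
  have := i'.isLt
  simp only [idxHi, idxLo, ne_eq, Fin.mk.injEq]; omega

lemma idxHi_injective : Function.Injective (idxHi : Fin n → Fin (2*n+1)) := by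
  intro i i' h
  simp only [idxHi, Fin.mk.injEq] at h
  exact Fin.ext (by omega)

lemma TpApp_idxHi (i' i : Fin n) (k : Fin n →₀ ℕ) :
    TpApp i' k (idxHi i) = if i' = i then b k idx0 else 0 := by
  rw [TpApp, if_neg (idxHi_ne_idx0 i)]
  simp [idxHi_injective.eq_iff, eq_comm]

lemma TmApp_idxHi (i' i : Fin n) (k : Fin n →₀ ℕ) : TmApp i' k (idxHi i) = 0 := by
  rw [TmApp, if_neg (idxHi_ne_idx0 i), if_neg (idxHi_ne_idxLo i i')]

lemma TmApp_idx0 (i : Fin n) (k : Fin n →₀ ℕ) : TmApp i k idx0 = -b k (idxHi i) := by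
  rw [TmApp, if_pos rfl]

lemma Gamma1_b_idxHi (k : Fin n →₀ ℕ) (i : Fin n) :
    Gamma1 (b k (idxHi i)) =
      b k (idxHi i) - (rt2 * (sgn k * k i)) • b (k - single i 1) idx0 := by
  simp [Gamma1, mkOp_b, TpApp_idxHi, TmApp_idxHi, smul_smul]

lemma Xminus_b_idxHi (j : Fin n) (k : Fin n →₀ ℕ) (i : Fin n) :
    Xminus j (b k (idxHi i)) = (rt2⁻¹ * k j) • b (k - single j 1) (idxHi i) := by
  rw [Xminus, mkOp_b, TmApp_idxHi, smul_zero, add_zero]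

lemma Xminus_b_idx0 (j : Fin n) (k : Fin n →₀ ℕ) :
    Xminus j (b k idx0) =
      (rt2⁻¹ * k j) • b (k - single j 1) idx0 - sgn k • b k (idxHi j) := by
  rw [Xminus, mkOp_b, TmApp_idx0, smul_neg, ← sub_eq_add_neg]

lemma deg_tsub_single_add_one {k : Fin n →₀ ℕ} {i : Fin n} (h : k i ≠ 0) :
    deg (k - single i 1) + 1 = deg k := by
  have hle : single i 1 ≤ k := by simpa [single_le_iff, Nat.one_le_iff_ne_zero] using h
  conv_rhs => rw [← tsub_add_cancel_of_le hle]
  change (k - single i 1).degree + 1 = ((k - single i 1) + single i 1).degree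
  rw [map_add, degree_single]

/-- If `k i = 0`, the truncated subtraction leaves `k` unchanged, but then both sides vanish. -/
lemma natCast_mul_sgn_tsub_single (k : Fin n →₀ ℕ) (i : Fin n) :
    (k i : ℂ) * sgn (k - single i 1) = -((k i : ℂ) * sgn k) := by
  by_cases h : k i = 0
  · simp [h]
  · rw [sgn, sgn, ← deg_tsub_single_add_one h, pow_succ]
    ring

lemma mul_tsub_single_apply_comm {ι : Type*} [DecidableEq ι] (k : ι →₀ ℕ) (i j : ι) :
    k i * (k - single i 1 : ι →₀ ℕ) j = k j * (k - single j 1 : ι →₀ ℕ) i := by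
  rcases eq_or_ne i j with rfl | hij
  · rfl
  · simp [single_eq_of_ne hij, single_eq_of_ne hij.symm, mul_comm]

lemma sgn_mul_self (k : Fin n →₀ ℕ) : sgn k * sgn k = 1 := by
  rw [sgn, ← mul_pow]
  norm_num

lemma rt2_mul_self : rt2 * rt2 = 2 := by
  rw [rt2, ← Complex.ofReal_mul, Real.mul_self_sqrt zero_le_two]
  norm_num

lemma rt2_ne_zero : rt2 ≠ 0 := by
  intro h
  simpa [h] using (rt2_mul_self).symm

end Intertwining

/-- Intertwining identity for `Γ₁` and `X_{-δⱼ}` on `x^k ⊗ v_{n+i}`. -/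
theorem stmt15 (n : ℕ) (k : Fin n →₀ ℕ) (i j : Fin n) :
    Xminus j (Gamma1 (b k (idxHi i))) =
      Gamma1 ((rt2⁻¹ * (k j : ℂ)) • b (k - Finsupp.single j 1) (idxHi i)
        - (rt2 * (k i : ℂ)) • b (k - Finsupp.single i 1) (idxHi j)) := by
  rw [Gamma1_b_idxHi, map_sub, map_smul, Xminus_b_idxHi, Xminus_b_idx0,
    map_sub, map_smul, map_smul, Gamma1_b_idxHi, Gamma1_b_idxHi,
    tsub_right_comm (a := k) (b := single j 1)]
  have hsgn_i := natCast_mul_sgn_tsub_single k i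
  have hsgn_j := natCast_mul_sgn_tsub_single k j
  have hsym : (k i * (k - single i 1 : Fin n →₀ ℕ) j : ℂ) =
      k j * (k - single j 1 : Fin n →₀ ℕ) i := by
    exact_mod_cast mul_tsub_single_apply_comm k i j
  rw [coe_tsub, coe_tsub] at hsym
  have hrt2 := rt2_mul_self
  have hinv := inv_mul_cancel₀ rt2_ne_zero
  have hsgn := sgn_mul_self k
  match_scalars <;> grind
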